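/- A fibration p : E → B has the weakly homotopically unique path lifting property (whupl) if and only if every loop in each fiber of p is nullhomotopic in E, i.e., every loop γ : [0,1] → E with p ∘ γ constant is homotopic relative to {0,1} to the constant loop at γ(0). -/

import Mathlib

/-!
Whupl gives the loop condition by comparing a loop in a fibre with the constant loop.
Conversely, if `p ∘ α = p ∘ β`, the loop `α · β⁻¹` projects to `(p ∘ α) · (p ∘ α)⁻¹`,
which is nullhomotopic. Lifting this nullhomotopy along the fibration gives a square in `E`
whose bottom edge is `α · β⁻¹` and whose three other edges lie in the fibre over `p (α 0)`.
Hence `α · β⁻¹` is homotopic to a loop in that fibre, which is nullhomotopic by assumption,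
so `α ≃ β`.
-/

universe u

open scoped unitInterval

/-- `p` has the weakly homotopically unique path lifting property (whupl). -/
def Whupl {E B : Type*} [TopologicalSpace E] [TopologicalSpace B] (p : C(E, B)) : Prop :=
  ∀ α β : C(unitInterval, E), α 0 = β 0 → α 1 = β 1 → p.comp α = p.comp β →
    α.HomotopicRel β {0, 1}

/-- `p` is a (Hurewicz) fibration: it has the homotopy lifting property with respect to
every topological space. -/
def IsFibration {E B : Type*} [TopologicalSpace E] [TopologicalSpace B] (p : C(E, B)) : Prop :=
  ∀ (X : Type u) [TopologicalSpace X] (f : C(X, E)) (F : C(X × unitInterval, B)),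
    (∀ x, F (x, 0) = p (f x)) →
    ∃ F' : C(X × unitInterval, E), (∀ z, p (F' z) = F z) ∧ (∀ x, F' (x, 0) = f x)

namespace Path

variable {X : Type*} [TopologicalSpace X] {x y z : X}

theorem homotopic_trans_symm_of_trans_homotopic {γ : Path x y} {r : Path y z} {δ : Path x z}
    (h : (γ.trans r).Homotopic δ) : γ.Homotopic (δ.trans r.symm) := by
  rw [← Homotopic.Quotient.eq] at h ⊢
  simp only [Homotopic.Quotient.mk_trans, Homotopic.Quotient.mk_symm] at h ⊢
  simp [← h]

theorem homotopic_of_trans_symm_homotopic_refl {γ δ : Path x y}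
    (h : (γ.trans δ.symm).Homotopic (Path.refl x)) : γ.Homotopic δ := by
  have h' := (homotopic_trans_symm_of_trans_homotopic h).trans (Homotopic.refl_trans δ.symm.symm)
  rwa [symm_symm] at h'

theorem map_trans_symm_homotopic_refl {Y : Type*} [TopologicalSpace Y] {f : X → Y}
    (hf : Continuous f) {γ δ : Path x y} (h : ∀ t, f (γ t) = f (δ t)) :
    ((γ.trans δ.symm).map hf).Homotopic (Path.refl (f x)) := by
  have hsymm : δ.symm.map hf = (γ.map hf).symm := by ext t; exact (h _).symm
  rw [Path.map_trans, hsymm]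
  exact Homotopic.trans_symm _

theorem homotopic_refl_iff_homotopicRel_const {x : X} (γ : Path x x) :
    γ.Homotopic (Path.refl x) ↔
      γ.toContinuousMap.HomotopicRel (ContinuousMap.const I (γ 0)) {0, 1} := by
  rw [γ.source]
  rfl

end Path

section Fibration

variable {E B : Type*} [TopologicalSpace E] [TopologicalSpace B] {p : C(E, B)}

theorem IsFibration.exists_homotopy_lift (hp : IsFibration.{u} p) {X : Type} [TopologicalSpace X]
    {f : C(X, E)} {g : C(X, B)} (G : (p.comp f).Homotopy g) :
    ∃ (f' : C(X, E)) (F : f.Homotopy f'), ∀ z, p (F z) = G z := by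
  obtain ⟨F, hFp, hF0⟩ := hp (ULift.{u} X) (f.comp ⟨ULift.down, continuous_uliftDown⟩)
    (G.toContinuousMap.comp ⟨fun z => (z.2, z.1.down), by fun_prop⟩) (fun _ => G.apply_zero _)
  let F' : C(I × X, E) := F.comp ⟨fun z => (ULift.up z.2, z.1), by fun_prop⟩
  exact ⟨F'.comp ⟨fun x => (1, x), by fun_prop⟩,
    { toContinuousMap := F'
      map_zero_left := fun _ => hF0 _
      map_one_left := fun _ => rfl }, fun z => hFp _⟩

theorem IsFibration.exists_homotopic_fiber_loop (hp : IsFibration.{u} p) {x : E} {γ : Path x x}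
    (hγ : (γ.map p.continuous).Homotopic (Path.refl (p x))) :
    ∃ μ : Path x x, γ.Homotopic μ ∧ Set.range μ ⊆ p ⁻¹' {p x} := by
  obtain ⟨K⟩ := hγ
  obtain ⟨g, H, hH⟩ := hp.exists_homotopy_lift K.toHomotopy
  let l : Path x (g 0) := (H.evalAt 0).cast γ.source.symm rfl
  let r : Path x (g 1) := (H.evalAt 1).cast γ.target.symm rfl
  let τ : Path (g 0) (g 1) := Path.id.map g.continuous
  have square : (γ.trans r).Homotopic (l.trans τ) :=
    (Path.Homotopic.map_trans_evalAt H Path.id).pathCast γ.source.symm rfl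
  refine ⟨(l.trans τ).trans r.symm, Path.homotopic_trans_symm_of_trans_homotopic square, ?_⟩
  rw [Path.trans_range, Path.trans_range, Path.symm_range]
  refine Set.union_subset (Set.union_subset ?_ ?_) ?_ <;> rintro _ ⟨t, rfl⟩
  · exact (hH (t, 0)).trans (K.source t)
  · have hτ := (hH (1, t)).trans (K.apply_one t)
    rwa [H.apply_one] at hτ
  · exact (hH (t, 1)).trans (K.target t)

end Fibration

theorem fibration_whupl_iff_loops_in_fibers_nullhomotopic {E B : Type*} [TopologicalSpace E]
    [TopologicalSpace B] (p : C(E, B)) (hp : IsFibration p) :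
    Whupl p ↔
    (∀ γ : C(unitInterval, E), γ 0 = γ 1 → (∀ t, p (γ t) = p (γ 0)) →
      γ.HomotopicRel (ContinuousMap.const unitInterval (γ 0)) {0, 1}) := by
  constructor
  · intro hW γ hγ hfib
    exact hW γ (ContinuousMap.const I (γ 0)) rfl hγ.symm (ContinuousMap.ext hfib)
  · intro hnull α β h0 h1 hpαβ
    let a : Path (α 0) (α 1) := ⟨α, rfl, rfl⟩
    let b : Path (α 0) (α 1) := ⟨β, h0.symm, h1.symm⟩
    obtain ⟨μ, haμ, hμ⟩ := hp.exists_homotopic_fiber_loop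
      (Path.map_trans_symm_homotopic_refl (γ := a) (δ := b) p.continuous
        fun t => congr($hpαβ t))
    have hμ_fiber (t : I) : p (μ t) = p (μ 0) := by
      rw [μ.source]
      exact hμ ⟨t, rfl⟩
    have hμ_null : μ.Homotopic (Path.refl _) := μ.homotopic_refl_iff_homotopicRel_const.mpr
      (hnull μ.toContinuousMap (μ.source.trans μ.target.symm) hμ_fiber)
    exact Path.homotopic_of_trans_symm_homotopic_refl (haμ.trans hμ_null)
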